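/- Let K(x'',x';T) = (m/(2πiℏT))^{1/2} exp[(im/(2ℏT))(x''−x')²] be the free-particle propagator. Define K₃(x₁,x₂,x₃;t₁,t₂,t₃) := K(x₁,x₂;t₂−t₁)·K(x₂,x₃;t₃−t₂)·K(x₃,x₁;t₁−t₃) for pairwise distinct times. Then K₃ = (m³/((2πiℏ)³ T₂₁T₃₂T₁₃))^{1/2} exp[−(im/(2ℏ)) (x₁T₃₂ + x₂T₁₃ + x₃T₂₁)²/(T₂₁T₃₂T₁₃)], where T_{kl} := t_k − t_l. In particular, since x₁T₃₂ + x₂T₁₃ + x₃T₂₁ equals twice the signed area of the triangle with vertices (x_k, t_k), K₃ is invariant under Galilean transformations (x,t) ↦ (x + vt + x₀, t + t₀). -/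

import Mathlib

open Real

/-- The free-particle propagator `K(x'',x';T) = (m/(2πiℏT))^{1/2} e^{(im/(2ℏT))(x''−x')²}`. -/
noncomputable def Kfree (m ℏ : ℝ) (x'' x' T : ℝ) : ℂ :=
  ((m : ℂ) / (2 * (π : ℂ) * Complex.I * (ℏ : ℂ) * (T : ℂ))) ^ ((1 : ℂ) / 2) *
    Complex.exp (Complex.I * (m : ℂ) / (2 * (ℏ : ℂ) * (T : ℂ)) * ((x'' : ℂ) - (x' : ℂ)) ^ 2)

/-- `K₃(x₁,x₂,x₃;t₁,t₂,t₃) := K(x₁,x₂;t₂−t₁)·K(x₂,x₃;t₃−t₂)·K(x₃,x₁;t₁−t₃)`. -/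
noncomputable def K3free (m ℏ : ℝ) (x₁ x₂ x₃ t₁ t₂ t₃ : ℝ) : ℂ :=
  Kfree m ℏ x₁ x₂ (t₂ - t₁) * Kfree m ℏ x₂ x₃ (t₃ - t₂) * Kfree m ℏ x₃ x₁ (t₁ - t₃)

/-!
Each base `m/(2πiℏT)` is purely imaginary, with argument `∓π/2` according to the sign of
`mT`. The three time differences sum to zero, so they are not all of one sign; hence the three
arguments add up to `±π/2`, no branch cut is crossed, and the principal square roots multiply to
the principal square root of the product. The exponents combine by a rational identity that
again uses `T₂₁ + T₃₂ + T₁₃ = 0`. The closed form depends on the times only through their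
differences and on the positions only through `x₁T₃₂ + x₂T₁₃ + x₃T₂₁`, which translations and
boosts leave unchanged.
-/

open Complex

theorem SignType.sign_inv {α : Type*} [Field α] [LinearOrder α] [IsStrictOrderedRing α]
    (x : α) : SignType.sign x⁻¹ = SignType.sign x := by
  rcases lt_trichotomy x 0 with h | rfl | h
  · rw [_root_.sign_neg h, _root_.sign_neg (inv_lt_zero.2 h)]
  · simp
  · rw [sign_pos h, sign_pos (inv_pos.2 h)]

lemma abs_sign_add_sign_add_sign_of_add_eq_zero {a b c : ℝ} (ha : a ≠ 0) (hb : b ≠ 0)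
    (hc : c ≠ 0) (h : a + b + c = 0) :
    |(SignType.sign a + SignType.sign b + SignType.sign c : ℝ)| = 1 := by
  rcases ha.lt_or_gt with ha | ha <;> rcases hb.lt_or_gt with hb | hb <;>
    rcases hc.lt_or_gt with hc | hc <;>
    first
    | (exfalso; linarith)
    | norm_num [sign_pos, _root_.sign_neg, *]

lemma sq_sub_div_add_sq_sub_div_add_sq_sub_div {K : Type*} [Field K] {a b c : K} (ha : a ≠ 0)
    (hb : b ≠ 0) (hc : c ≠ 0) (h : a + b + c = 0) (x₁ x₂ x₃ : K) :
    (x₁ - x₂) ^ 2 / a + (x₂ - x₃) ^ 2 / b + (x₃ - x₁) ^ 2 / c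
      = -(x₁ * b + x₂ * c + x₃ * a) ^ 2 / (a * b * c) := by
  obtain rfl : c = -a - b := by linear_combination h
  field_simp
  ring

namespace Complex

lemma log_mul_mul_of_arg_add_add_mem {x y z : ℂ} (hx : x ≠ 0) (hy : y ≠ 0) (hz : z ≠ 0)
    (h : arg x + arg y + arg z ∈ Set.Ioc (-π) π) :
    log (x * y * z) = log x + log y + log z := by
  have him : (log x + log y + log z).im = arg x + arg y + arg z := by simp [log_im]
  calc log (x * y * z) = log (exp (log x + log y + log z)) := by
        rw [exp_add, exp_add, exp_log hx, exp_log hy, exp_log hz]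
    _ = log x + log y + log z := log_exp (him ▸ h.1) (him ▸ h.2)

lemma mul_mul_cpow_of_arg_add_add_mem {x y z : ℂ} (hx : x ≠ 0) (hy : y ≠ 0) (hz : z ≠ 0)
    (h : arg x + arg y + arg z ∈ Set.Ioc (-π) π) (w : ℂ) :
    (x * y * z) ^ w = x ^ w * y ^ w * z ^ w := by
  rw [cpow_def_of_ne_zero (by simp [hx, hy, hz]), log_mul_mul_of_arg_add_add_mem hx hy hz h,
    cpow_def_of_ne_zero hx, cpow_def_of_ne_zero hy, cpow_def_of_ne_zero hz, ← exp_add, ← exp_add,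
    add_mul, add_mul]

lemma arg_ofReal_mul_I (r : ℝ) : arg (r * I) = π / 2 * SignType.sign r := by
  rcases lt_trichotomy r 0 with hr | rfl | hr
  · rw [show (r : ℂ) * I = ((-r : ℝ) : ℂ) * -I by push_cast; ring,
      arg_real_mul _ (neg_pos.2 hr), arg_neg_I, _root_.sign_neg hr]
    simp
  · simp
  · rw [arg_real_mul _ hr, arg_I, sign_pos hr]; simp

lemma arg_ofReal_div_mul_I_add_add_mem_Ioc {c a b d : ℝ} (hc : c ≠ 0) (ha : a ≠ 0)
    (hb : b ≠ 0) (hd : d ≠ 0) (h : a + b + d = 0) :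
    arg ((c / a : ℝ) * I) + arg ((c / b : ℝ) * I) + arg ((c / d : ℝ) * I) ∈ Set.Ioc (-π) π := by
  have hsum : arg ((c / a : ℝ) * I) + arg ((c / b : ℝ) * I) + arg ((c / d : ℝ) * I)
      = π / 2 * (SignType.sign (c * a) + SignType.sign (c * b) + SignType.sign (c * d) : ℝ) := by
    simp only [arg_ofReal_mul_I, div_eq_mul_inv, sign_mul, SignType.sign_inv]
    push_cast
    ring
  have habs : |arg ((c / a : ℝ) * I) + arg ((c / b : ℝ) * I) + arg ((c / d : ℝ) * I)| = π / 2 := by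
    rw [hsum, abs_mul, abs_sign_add_sign_add_sign_of_add_eq_zero (by positivity) (by positivity)
      (by positivity) (by linear_combination c * h), abs_of_pos (by positivity), mul_one]
  have := pi_pos
  constructor <;> linarith [abs_le.1 habs.le]

end Complex

lemma ofReal_div_two_pi_I_mul_eq (m ℏ T : ℝ) :
    (m : ℂ) / (2 * π * I * ℏ * T) = ((-(m / (2 * π * ℏ)) / T : ℝ) : ℂ) * I := by
  rw [show (2 : ℂ) * π * I * ℏ * T = 2 * π * ℏ * T * I by ring, ← div_div, div_I]
  push_cast
  ring

lemma pow_three_div_eq_div_mul_div_mul_div (m ℏ a b c : ℝ) :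
    (m : ℂ) ^ 3 / ((2 * π * I * ℏ) ^ 3 * a * b * c)
      = (m : ℂ) / (2 * π * I * ℏ * a) * ((m : ℂ) / (2 * π * I * ℏ * b))
        * ((m : ℂ) / (2 * π * I * ℏ * c)) := by
  rw [div_mul_div_comm, div_mul_div_comm]
  ring

theorem K3free_eq_closed_form {m ℏ : ℝ} (hm : m ≠ 0) (hℏ : ℏ ≠ 0) (x₁ x₂ x₃ : ℝ)
    {t₁ t₂ t₃ : ℝ} (h12 : t₁ ≠ t₂) (h23 : t₂ ≠ t₃) (h13 : t₁ ≠ t₃) :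
    K3free m ℏ x₁ x₂ x₃ t₁ t₂ t₃
      = ((m : ℂ) ^ 3 / ((2 * (π : ℂ) * I * (ℏ : ℂ)) ^ 3 *
            ((t₂ - t₁ : ℝ) : ℂ) * ((t₃ - t₂ : ℝ) : ℂ) * ((t₁ - t₃ : ℝ) : ℂ))) ^ ((1 : ℂ) / 2) *
        Complex.exp (-(I * (m : ℂ) / (2 * (ℏ : ℂ))) *
          (((x₁ * (t₃ - t₂) + x₂ * (t₁ - t₃) + x₃ * (t₂ - t₁) : ℝ) : ℂ)) ^ 2 /
          (((t₂ - t₁ : ℝ) : ℂ) * ((t₃ - t₂ : ℝ) : ℂ) * ((t₁ - t₃ : ℝ) : ℂ))) := by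
  have ha : t₂ - t₁ ≠ 0 := sub_ne_zero.2 h12.symm
  have hb : t₃ - t₂ ≠ 0 := sub_ne_zero.2 h23.symm
  have hc : t₁ - t₃ ≠ 0 := sub_ne_zero.2 h13
  have hsum : (t₂ - t₁) + (t₃ - t₂) + (t₁ - t₃) = 0 := by ring
  have hk : -(m / (2 * π * ℏ)) ≠ 0 := by have := pi_pos.ne'; simp [*]
  have hbase : ∀ T : ℝ, T ≠ 0 → ((-(m / (2 * π * ℏ)) / T : ℝ) : ℂ) * I ≠ 0 := fun T hT ↦
    mul_ne_zero (ofReal_ne_zero.2 (div_ne_zero hk hT)) I_ne_zero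
  have hexp := sq_sub_div_add_sq_sub_div_add_sq_sub_div (ofReal_ne_zero.2 ha)
    (ofReal_ne_zero.2 hb) (ofReal_ne_zero.2 hc) (by exact_mod_cast hsum) (x₁ : ℂ) x₂ x₃
  unfold K3free Kfree
  rw [pow_three_div_eq_div_mul_div_mul_div, ofReal_div_two_pi_I_mul_eq,
    ofReal_div_two_pi_I_mul_eq, ofReal_div_two_pi_I_mul_eq,
    mul_mul_cpow_of_arg_add_add_mem (hbase _ ha) (hbase _ hb) (hbase _ hc)
      (arg_ofReal_div_mul_I_add_add_mem_Ioc hk ha hb hc hsum),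
    show ∀ p₁ p₂ p₃ e₁ e₂ e₃ : ℂ, p₁ * exp e₁ * (p₂ * exp e₂) * (p₃ * exp e₃)
      = p₁ * p₂ * p₃ * exp (e₁ + e₂ + e₃) from fun _ _ _ _ _ _ ↦ by
        rw [Complex.exp_add, Complex.exp_add]; ring]
  congr 2
  simp only [ofReal_add, ofReal_mul]
  linear_combination (I * m / (2 * ℏ)) * hexp

theorem K3free_eq_and_galilei_invariant
    (m ℏ : ℝ) (hm : 0 < m) (hℏ : 0 < ℏ)
    (x₁ x₂ x₃ t₁ t₂ t₃ : ℝ)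
    (h12 : t₁ ≠ t₂) (h23 : t₂ ≠ t₃) (h13 : t₁ ≠ t₃) :
    K3free m ℏ x₁ x₂ x₃ t₁ t₂ t₃
      = ((m : ℂ) ^ 3 / ((2 * (π : ℂ) * Complex.I * (ℏ : ℂ)) ^ 3 *
            ((t₂ - t₁ : ℝ) : ℂ) * ((t₃ - t₂ : ℝ) : ℂ) * ((t₁ - t₃ : ℝ) : ℂ))) ^ ((1 : ℂ) / 2) *
        Complex.exp (-(Complex.I * (m : ℂ) / (2 * (ℏ : ℂ))) *
          (((x₁ * (t₃ - t₂) + x₂ * (t₁ - t₃) + x₃ * (t₂ - t₁) : ℝ) : ℂ)) ^ 2 /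
          (((t₂ - t₁ : ℝ) : ℂ) * ((t₃ - t₂ : ℝ) : ℂ) * ((t₁ - t₃ : ℝ) : ℂ))) ∧
    (∀ v x₀ t₀ : ℝ,
      K3free m ℏ (x₁ + v * t₁ + x₀) (x₂ + v * t₂ + x₀) (x₃ + v * t₃ + x₀)
          (t₁ + t₀) (t₂ + t₀) (t₃ + t₀)
        = K3free m ℏ x₁ x₂ x₃ t₁ t₂ t₃) := by
  refine ⟨K3free_eq_closed_form hm.ne' hℏ.ne' x₁ x₂ x₃ h12 h23 h13, fun v x₀ t₀ ↦ ?_⟩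
  have hshift {a b : ℝ} (h : a ≠ b) : a + t₀ ≠ b + t₀ := (add_left_injective t₀).ne h
  rw [K3free_eq_closed_form hm.ne' hℏ.ne' _ _ _ (hshift h12) (hshift h23) (hshift h13),
    K3free_eq_closed_form hm.ne' hℏ.ne' x₁ x₂ x₃ h12 h23 h13]
  simp only [add_sub_add_right_eq_sub]
  have harea : (x₁ + v * t₁ + x₀) * (t₃ - t₂) + (x₂ + v * t₂ + x₀) * (t₁ - t₃)
      + (x₃ + v * t₃ + x₀) * (t₂ - t₁) = x₁ * (t₃ - t₂) + x₂ * (t₁ - t₃) + x₃ * (t₂ - t₁) := by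
    ring
  rw [harea]
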